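/- arXiv:1104.4297 — 11 statements merged into one kernel-verified Lean document; each statement's English description precedes it below -/
import Mathlib

section
/- Let s ≥ 1 and 2 ≤ i ≤ e−1. Let γ = (γ_1,…,γ_e) be an e-tuple of formal power series in K⟦t⟧ such that E_{jh}(γ) ≡ 0 mod t^{2s} for all pairs 1 ≤ j < h−1 ≤ e−1, and such that ord(γ_i) = ord(γ_{i+1}) = s. Then ord(γ_j) ≥ s for every j = 1,…,e. Conversely, if ord(γ_j) ≥ s for all j = 1,…,e, then E_{jh}(γ) ≡ 0 mod t^{2s} for all pairs 1 ≤ j < h−1 ≤ e−1. -/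
open MvPolynomial

/-- The Riemenschneider quasi-determinantal equation
`E_{ij} = x_i x_j - x_{i+1} (∏_{n=i+1}^{j-1} x_n^{c_n - 2}) x_{j-1}`
of the affine toric surface determined by the integers `c`. -/
noncomputable def E (K : Type*) [Field K] (c : ℕ → ℕ) (i j : ℕ) : MvPolynomial ℕ K :=
  X i * X j - X (i + 1) * (∏ n ∈ Finset.Ico (i + 1) j, X n ^ (c n - 2)) * X (j - 1)

/-!
Write `E_{jh}(γ) = γ_j γ_h - B_{jh}` with `B_{jh} = γ_{j+1} (∏ γ_n^{c_n-2}) γ_{h-1}`. Once the outer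
factors of `B_{jh}` have order `≥ s`, `ord B_{jh} ≥ 2s`, so `E_{jh}(γ) ≡ 0 mod t^{2s}` becomes
`ord (γ_j γ_h) ≥ 2s`; this gives the converse at once. For the direct part, the equations
`E_{j,i+1}` with `ord γ_{i+1} = s` exactly force `ord γ_j ≥ s`, which propagates the bound down
from `j = i` to `j = 1`; symmetrically the equations `E_{i,h}` with `ord γ_i = s` propagate it up
from `h = i + 1` to `h = e`.
-/

namespace PowerSeries

theorem le_order_sub {R : Type*} [Ring R] {φ ψ : R⟦X⟧} {n : ℕ∞} (hφ : n ≤ φ.order)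
    (hψ : n ≤ ψ.order) : n ≤ (φ - ψ).order := by
  rw [sub_eq_add_neg]
  exact (le_min hφ (by rwa [order_neg])).trans (min_order_le_order_add _ _)

theorem le_order_of_le_order_sub {R : Type*} [Ring R] {φ ψ : R⟦X⟧} {n : ℕ∞}
    (h : n ≤ (φ - ψ).order) (hψ : n ≤ ψ.order) : n ≤ φ.order := by
  simpa using le_order_sub h (show n ≤ (-ψ).order by rwa [order_neg])

theorem le_order_of_two_mul_le_order_mul {R : Type*} [Semiring R] [NoZeroDivisors R]
    {φ ψ : R⟦X⟧} {s : ℕ} (h : ((2 * s : ℕ) : ℕ∞) ≤ (φ * ψ).order) (hψ : ψ.order = s) :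
    (s : ℕ∞) ≤ φ.order := by
  rw [order_mul, hψ, Nat.cast_mul, Nat.cast_ofNat, two_mul,
    ENat.add_le_add_iff_right (ENat.natCast_ne_top s)] at h
  exact h

end PowerSeries

section Riemenschneider

def IsSolutionModPow (K : Type*) [Field K] (c : ℕ → ℕ) (e : ℕ) (γ : ℕ → PowerSeries K)
    (N : ℕ) : Prop :=
  ∀ j h : ℕ, 1 ≤ j → j + 2 ≤ h → h ≤ e → (N : ℕ∞) ≤ (aeval γ (E K c j h)).order

theorem aeval_E {K : Type*} [Field K] (c : ℕ → ℕ) (γ : ℕ → PowerSeries K) (j h : ℕ) :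
    aeval γ (E K c j h) =
      γ j * γ h - γ (j + 1) * (∏ n ∈ Finset.Ico (j + 1) h, γ n ^ (c n - 2)) * γ (h - 1) := by
  simp [E]

variable {K : Type*} [Field K] {c : ℕ → ℕ} {γ : ℕ → PowerSeries K} {s : ℕ}

theorem two_mul_le_order_mul_prod_mul {j h : ℕ} (hj : (s : ℕ∞) ≤ (γ (j + 1)).order)
    (hh : (s : ℕ∞) ≤ (γ (h - 1)).order) :
    ((2 * s : ℕ) : ℕ∞) ≤
      (γ (j + 1) * (∏ n ∈ Finset.Ico (j + 1) h, γ n ^ (c n - 2)) * γ (h - 1)).order :=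
  calc ((2 * s : ℕ) : ℕ∞) = s + 0 + s := by push_cast; ring
    _ ≤ _ := add_le_add (add_le_add hj zero_le) hh
    _ ≤ _ := add_le_add_left (PowerSeries.le_order_mul _ _) _
    _ ≤ _ := PowerSeries.le_order_mul _ _

theorem two_mul_le_order_aeval_E {j h : ℕ} (hj : (s : ℕ∞) ≤ (γ j).order)
    (hj₁ : (s : ℕ∞) ≤ (γ (j + 1)).order) (hh₁ : (s : ℕ∞) ≤ (γ (h - 1)).order)
    (hh : (s : ℕ∞) ≤ (γ h).order) :
    ((2 * s : ℕ) : ℕ∞) ≤ (aeval γ (E K c j h)).order := by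
  rw [aeval_E]
  refine PowerSeries.le_order_sub ?_ (two_mul_le_order_mul_prod_mul hj₁ hh₁)
  calc ((2 * s : ℕ) : ℕ∞) = s + s := by push_cast; ring
    _ ≤ _ := add_le_add hj hh
    _ ≤ _ := PowerSeries.le_order_mul _ _

theorem two_mul_le_order_mul_of_two_mul_le_order_aeval_E {j h : ℕ}
    (hE : ((2 * s : ℕ) : ℕ∞) ≤ (aeval γ (E K c j h)).order)
    (hj₁ : (s : ℕ∞) ≤ (γ (j + 1)).order) (hh₁ : (s : ℕ∞) ≤ (γ (h - 1)).order) :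
    ((2 * s : ℕ) : ℕ∞) ≤ (γ j * γ h).order := by
  rw [aeval_E] at hE
  exact PowerSeries.le_order_of_le_order_sub hE (two_mul_le_order_mul_prod_mul hj₁ hh₁)

namespace IsSolutionModPow

variable {e i : ℕ}

theorem le_order_of_le (hγ : IsSolutionModPow K c e γ (2 * s)) (hie : i + 1 ≤ e)
    (hi : (γ i).order = s) (hi₁ : (γ (i + 1)).order = s) {j : ℕ} (hj : 1 ≤ j) (hji : j ≤ i) :
    (s : ℕ∞) ≤ (γ j).order := by
  induction hji using Nat.decreasingInduction with
  | self => exact hi.ge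
  | of_succ k hki ih =>
    have hγi : (s : ℕ∞) ≤ (γ (i + 1 - 1)).order := by simp [hi]
    exact PowerSeries.le_order_of_two_mul_le_order_mul
      (two_mul_le_order_mul_of_two_mul_le_order_aeval_E (hγ k (i + 1) hj (by omega) hie)
        (ih (by omega)) hγi) hi₁

theorem le_order_of_lt (hγ : IsSolutionModPow K c e γ (2 * s)) (hi_pos : 0 < i)
    (hi : (γ i).order = s) (hi₁ : (γ (i + 1)).order = s) {h : ℕ} (hih : i < h) (he : h ≤ e) :
    (s : ℕ∞) ≤ (γ h).order := by
  induction h, Nat.succ_le_of_lt hih using Nat.le_induction with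
  | base => exact hi₁.ge
  | succ n hin ih =>
    have := two_mul_le_order_mul_of_two_mul_le_order_aeval_E (hγ i (n + 1) hi_pos (by omega) he)
      hi₁.ge (by simpa using ih (by omega) (by omega))
    exact PowerSeries.le_order_of_two_mul_le_order_mul (mul_comm (γ i) _ ▸ this) hi

end IsSolutionModPow

theorem isSolutionModPow_two_mul_of_le_order {e : ℕ}
    (hγ : ∀ j : ℕ, 1 ≤ j → j ≤ e → (s : ℕ∞) ≤ (γ j).order) :
    IsSolutionModPow K c e γ (2 * s) := fun j h hj hjh he =>
  two_mul_le_order_aeval_E (hγ j hj (by omega)) (hγ (j + 1) (by omega) (by omega))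
    (hγ (h - 1) (by omega) (by omega)) (hγ h (by omega) he)

end Riemenschneider

theorem order_ge_of_contact_and_converse_general (K : Type*) [Field K] (e : ℕ)
    (c : ℕ → ℕ)
    (s : ℕ) (i : ℕ) (hi2 : 2 ≤ i) (hie : i + 1 ≤ e) :
    (∀ γ : ℕ → PowerSeries K,
      (∀ j h : ℕ, 1 ≤ j → j + 2 ≤ h → h ≤ e →
        ((2 * s : ℕ) : ℕ∞) ≤ (MvPolynomial.aeval γ (E K c j h)).order) →
      (γ i).order = (s : ℕ∞) → (γ (i + 1)).order = (s : ℕ∞) →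
      ∀ j : ℕ, 1 ≤ j → j ≤ e → ((s : ℕ) : ℕ∞) ≤ (γ j).order) ∧
    (∀ γ : ℕ → PowerSeries K,
      (∀ j : ℕ, 1 ≤ j → j ≤ e → ((s : ℕ) : ℕ∞) ≤ (γ j).order) →
      ∀ j h : ℕ, 1 ≤ j → j + 2 ≤ h → h ≤ e →
        ((2 * s : ℕ) : ℕ∞) ≤ (MvPolynomial.aeval γ (E K c j h)).order) := by
  refine ⟨fun γ hγ hi hi₁ j hj hje => ?_, fun γ hγ => isSolutionModPow_two_mul_of_le_order hγ⟩
  rcases le_or_gt j i with hji | hij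
  · exact IsSolutionModPow.le_order_of_le hγ hie hi hi₁ hj hji
  · exact IsSolutionModPow.le_order_of_lt hγ (by omega) hi hi₁ hij hje

/-- Lemma 4.1: if `γ` satisfies all equations `E_{jh}` mod `t^{2s}` and
`ord(γ_i) = ord(γ_{i+1}) = s` for some `2 ≤ i ≤ e-1`, then `ord(γ_j) ≥ s` for all
`1 ≤ j ≤ e`; conversely, if `ord(γ_j) ≥ s` for all `j`, then all the equations
`E_{jh}` vanish mod `t^{2s}`. -/
theorem order_ge_of_contact_and_converse (K : Type*) [Field K] (e : ℕ) (he : 4 ≤ e)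
    (c : ℕ → ℕ) (hc : ∀ i, 2 ≤ i → i + 1 ≤ e → 2 ≤ c i)
    (s : ℕ) (hs : 1 ≤ s) (i : ℕ) (hi2 : 2 ≤ i) (hie : i + 1 ≤ e) :
    (∀ γ : ℕ → PowerSeries K,
      (∀ j h : ℕ, 1 ≤ j → j + 2 ≤ h → h ≤ e →
        ((2 * s : ℕ) : ℕ∞) ≤ (MvPolynomial.aeval γ (E K c j h)).order) →
      (γ i).order = (s : ℕ∞) → (γ (i + 1)).order = (s : ℕ∞) →
      ∀ j : ℕ, 1 ≤ j → j ≤ e → ((s : ℕ) : ℕ∞) ≤ (γ j).order) ∧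
    (∀ γ : ℕ → PowerSeries K,
      (∀ j : ℕ, 1 ≤ j → j ≤ e → ((s : ℕ) : ℕ∞) ≤ (γ j).order) →
      ∀ j h : ℕ, 1 ≤ j → j + 2 ≤ h → h ≤ e →
        ((2 * s : ℕ) : ℕ∞) ≤ (MvPolynomial.aeval γ (E K c j h)).order) :=
  order_ge_of_contact_and_converse_general K e c s i hi2 hie
end

section
/- Let m, s be integers with m ≥ 2s−1 ≥ 1 and let 2 ≤ i ≤ e−1. Let γ = (γ_1,…,γ_e) be an e-tuple of formal power series in K⟦t⟧ such that: ord(γ_j) ≥ s for all j = 1,…,e; ord(γ_i) = s; E_{i−1,i+1}(γ) ≡ 0 mod t^{m+1}; E_{j,i}(γ) ≡ 0 mod t^{m+1} for all 1 ≤ j < i−1; and E_{i,j}(γ) ≡ 0 mod t^{m+1} for all j with i < j−1 ≤ e−1. Then E_{jh}(γ) ≡ 0 mod t^{m+1} for ALL pairs 1 ≤ j < h−1 ≤ e−1. -/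
/-!
Multiplying `E_{jh}` by `x_i` rewrites it as a combination of two equations in which the index `i`
occurs (or which were obtained earlier), with coefficients that are monomials in the variables.
Evaluated at `γ`, those coefficients have order at least `s`, so `γ_i E_{jh}(γ)` has order at least
`s + m + 1`; since `ord γ_i = s`, cancelling `γ_i` gives `ord E_{jh}(γ) ≥ m + 1`.
-/

open MvPolynomial

theorem PowerSeries.le_order_of_mul_eq_add {R : Type*} [Ring R] [NoZeroDivisors R]
    {u f a b g h : PowerSeries R} {s : ℕ} {N : ℕ∞} (hu : u.order = s)
    (ha : s ≤ a.order) (hb : s ≤ b.order) (hg : N ≤ g.order) (hh : N ≤ h.order)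
    (H : u * f = a * g + b * h) : N ≤ f.order := by
  have hsum : (s : ℕ∞) + N ≤ (u * f).order := by
    rw [H]
    refine le_trans (le_min ?_ ?_) (min_order_le_order_add _ _)
    · exact (add_le_add ha hg).trans (le_order_mul _ _)
    · exact (add_le_add hb hh).trans (le_order_mul _ _)
  rw [order_mul, hu] at hsum
  exact (WithTop.add_le_add_iff_left (ENat.natCast_ne_top s)).mp hsum

namespace MvPolynomial

variable {σ R : Type*}

theorem le_order_aeval_X_mul [CommSemiring R] {γ : σ → PowerSeries R} {k : σ} {s : ℕ∞}
    (hk : s ≤ (γ k).order) (p : MvPolynomial σ R) : s ≤ (aeval γ (X k * p)).order := by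
  rw [map_mul, aeval_X]
  exact hk.trans (le_self_add.trans (PowerSeries.le_order_mul _ _))

theorem le_order_aeval_mul_X [CommSemiring R] {γ : σ → PowerSeries R} {k : σ} {s : ℕ∞}
    (hk : s ≤ (γ k).order) (p : MvPolynomial σ R) : s ≤ (aeval γ (p * X k)).order := by
  rw [mul_comm]
  exact le_order_aeval_X_mul hk p

variable [CommRing R] [NoZeroDivisors R] {γ : σ → PowerSeries R} {i : σ} {s : ℕ} {N : ℕ∞}
  {f a b g h : MvPolynomial σ R}

theorem le_order_aeval_of_X_mul_eq_add (hi : (γ i).order = s)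
    (ha : s ≤ (aeval γ a).order) (hb : s ≤ (aeval γ b).order)
    (hg : N ≤ (aeval γ g).order) (hh : N ≤ (aeval γ h).order)
    (H : X i * f = a * g + b * h) : N ≤ (aeval γ f).order :=
  PowerSeries.le_order_of_mul_eq_add hi ha hb hg hh
    (by rw [← aeval_X (R := R) γ i, ← map_mul, H, map_add, map_mul, map_mul])

theorem le_order_aeval_of_X_mul_eq_sub (hi : (γ i).order = s)
    (ha : s ≤ (aeval γ a).order) (hb : s ≤ (aeval γ b).order)
    (hg : N ≤ (aeval γ g).order) (hh : N ≤ (aeval γ h).order)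
    (H : X i * f = a * g - b * h) : N ≤ (aeval γ f).order :=
  le_order_aeval_of_X_mul_eq_add hi ha (b := -b) (by rwa [map_neg, PowerSeries.order_neg]) hg hh
    (by rw [H, neg_mul, sub_eq_add_neg])

end MvPolynomial

section Syzygies

variable (K : Type*) [Field K] (c : ℕ → ℕ) {i j h : ℕ}

theorem X_mul_E_eq_add (hji : j < i) (hih : i ≤ h) :
    X i * E K c j h = X h * E K c j i
      + X (j + 1) * (∏ n ∈ Finset.Ico (j + 1) i, X n ^ (c n - 2)) * E K c (i - 1) h := by
  rw [E, E, E, Nat.sub_add_cancel (by omega : 1 ≤ i),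
    ← Finset.prod_Ico_consecutive _ (by omega : j + 1 ≤ i) hih]
  ring

theorem X_mul_E_eq_sub (hij : i ≤ j) (hjh : j < h) :
    X i * E K c j h = X j * E K c i h
      - (∏ n ∈ Finset.Ico (j + 1) h, X n ^ (c n - 2)) * X (h - 1) * E K c i (j + 1) := by
  rw [E, E, E, Nat.add_sub_cancel,
    ← Finset.prod_Ico_consecutive _ (by omega : i + 1 ≤ j + 1) (by omega : j + 1 ≤ h)]
  ring

end Syzygies

section Propagation

variable {K : Type*} [Field K] {c : ℕ → ℕ} {e s i : ℕ} {N : ℕ∞} {γ : ℕ → PowerSeries K}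

theorem le_order_aeval_E_of_right_le
    (hord : ∀ j : ℕ, 1 ≤ j → j ≤ e → (s : ℕ∞) ≤ (γ j).order) (hγi : (γ i).order = s)
    (hElow : ∀ j : ℕ, 1 ≤ j → j + 2 ≤ i → N ≤ (aeval γ (E K c j i)).order)
    {j h : ℕ} (hj : 1 ≤ j) (hjh : j + 2 ≤ h) (hhi : h ≤ i) (hhe : h ≤ e) :
    N ≤ (aeval γ (E K c j h)).order := by
  obtain rfl | hhi := hhi.eq_or_lt
  · exact hElow j hj hjh
  have H := eq_sub_of_add_eq (X_mul_E_eq_add K c (by omega : j < h) hhi.le).symm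
  exact le_order_aeval_of_X_mul_eq_sub hγi (by rw [aeval_X]; exact hord h (by omega) hhe)
    (le_order_aeval_X_mul (hord (j + 1) (by omega) (by omega)) _)
    (hElow j hj (by omega)) (hElow (h - 1) (by omega) (by omega)) H

theorem le_order_aeval_E_of_le_left
    (hord : ∀ j : ℕ, 1 ≤ j → j ≤ e → (s : ℕ∞) ≤ (γ j).order) (hγi : (γ i).order = s)
    (hEhigh : ∀ j : ℕ, i + 2 ≤ j → j ≤ e → N ≤ (aeval γ (E K c i j)).order)
    {j h : ℕ} (hj : 1 ≤ j) (hij : i ≤ j) (hjh : j + 2 ≤ h) (hhe : h ≤ e) :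
    N ≤ (aeval γ (E K c j h)).order := by
  obtain rfl | hij := hij.eq_or_lt
  · exact hEhigh h hjh hhe
  exact le_order_aeval_of_X_mul_eq_sub hγi (by rw [aeval_X]; exact hord j hj (by omega))
    (le_order_aeval_mul_X (hord (h - 1) (by omega) (by omega)) _)
    (hEhigh h (by omega) hhe) (hEhigh (j + 1) (by omega) (by omega))
    (X_mul_E_eq_sub K c hij.le (by omega))

theorem le_order_aeval_E_pred_left
    (hord : ∀ j : ℕ, 1 ≤ j → j ≤ e → (s : ℕ∞) ≤ (γ j).order) (hγi : (γ i).order = s)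
    (hEi : N ≤ (aeval γ (E K c (i - 1) (i + 1))).order)
    (hEhigh : ∀ j : ℕ, i + 2 ≤ j → j ≤ e → N ≤ (aeval γ (E K c i j)).order)
    (hi : 2 ≤ i) {h : ℕ} (hih : i < h) (hhe : h ≤ e) :
    N ≤ (aeval γ (E K c (i - 1) h)).order := by
  obtain rfl | hih := (Nat.succ_le_of_lt hih).eq_or_lt
  · exact hEi
  have H := X_mul_E_eq_sub K c (i := i - 1) (j := i) (h := h) (by omega) (by omega)
  exact le_order_aeval_of_X_mul_eq_add hγi
    (by rw [aeval_X]; exact hord (i - 1) (by omega) (by omega))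
    (le_order_aeval_mul_X (hord (h - 1) (by omega) (by omega)) _) (hEhigh h hih hhe) hEi
    (sub_eq_iff_eq_add.mp H.symm)

theorem le_order_aeval_E_of_lt_of_lt
    (hord : ∀ j : ℕ, 1 ≤ j → j ≤ e → (s : ℕ∞) ≤ (γ j).order) (hγi : (γ i).order = s)
    (hEi : N ≤ (aeval γ (E K c (i - 1) (i + 1))).order)
    (hElow : ∀ j : ℕ, 1 ≤ j → j + 2 ≤ i → N ≤ (aeval γ (E K c j i)).order)
    (hEhigh : ∀ j : ℕ, i + 2 ≤ j → j ≤ e → N ≤ (aeval γ (E K c i j)).order)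
    {j h : ℕ} (hj : 1 ≤ j) (hji : j + 2 ≤ i) (hih : i < h) (hhe : h ≤ e) :
    N ≤ (aeval γ (E K c j h)).order :=
  le_order_aeval_of_X_mul_eq_add hγi (by rw [aeval_X]; exact hord h (by omega) hhe)
    (le_order_aeval_X_mul (hord (j + 1) (by omega) (by omega)) _) (hElow j hj hji)
    (le_order_aeval_E_pred_left hord hγi hEi hEhigh (by omega) hih hhe)
    (X_mul_E_eq_add K c (by omega) hih.le)

end Propagation

theorem all_equations_of_some_general (K : Type*) [Field K] (e : ℕ)
    (c : ℕ → ℕ)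
    (m s : ℕ)
    (i : ℕ) (hi2 : 2 ≤ i)
    (γ : ℕ → PowerSeries K)
    (hord : ∀ j : ℕ, 1 ≤ j → j ≤ e → ((s : ℕ) : ℕ∞) ≤ (γ j).order)
    (hγi : (γ i).order = (s : ℕ∞))
    (hEi : ((m + 1 : ℕ) : ℕ∞) ≤ (MvPolynomial.aeval γ (E K c (i - 1) (i + 1))).order)
    (hElow : ∀ j : ℕ, 1 ≤ j → j + 2 ≤ i →
      ((m + 1 : ℕ) : ℕ∞) ≤ (MvPolynomial.aeval γ (E K c j i)).order)
    (hEhigh : ∀ j : ℕ, i + 2 ≤ j → j ≤ e →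
      ((m + 1 : ℕ) : ℕ∞) ≤ (MvPolynomial.aeval γ (E K c i j)).order) :
    ∀ j h : ℕ, 1 ≤ j → j + 2 ≤ h → h ≤ e →
      ((m + 1 : ℕ) : ℕ∞) ≤ (MvPolynomial.aeval γ (E K c j h)).order := by
  intro j h hj hjh hhe
  by_cases hhi : h ≤ i
  · exact le_order_aeval_E_of_right_le hord hγi hElow hj hjh hhi hhe
  by_cases hij : i ≤ j
  · exact le_order_aeval_E_of_le_left hord hγi hEhigh hj hij hjh hhe
  obtain rfl | hji : j = i - 1 ∨ j + 2 ≤ i := by omega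
  · exact le_order_aeval_E_pred_left hord hγi hEi hEhigh hi2 (by omega) hhe
  · exact le_order_aeval_E_of_lt_of_lt hord hγi hEi hElow hEhigh hj hji (by omega) hhe

/-- Lemma 4.3: if `ord(γ_j) ≥ s` for all `j`, `ord(γ_i) = s`, and the equations
`E_{i-1,i+1}`, `E_{j,i}` (for `1 ≤ j < i-1`) and `E_{i,j}` (for `i < j-1 ≤ e-1`)
vanish mod `t^{m+1}`, then ALL the equations `E_{jh}` vanish mod `t^{m+1}`. -/
theorem all_equations_of_some (K : Type*) [Field K] (e : ℕ) (he : 4 ≤ e)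
    (c : ℕ → ℕ) (hc : ∀ i, 2 ≤ i → i + 1 ≤ e → 2 ≤ c i)
    (m s : ℕ) (hs : 1 ≤ s) (hm : 2 * s - 1 ≤ m)
    (i : ℕ) (hi2 : 2 ≤ i) (hie : i + 1 ≤ e)
    (γ : ℕ → PowerSeries K)
    (hord : ∀ j : ℕ, 1 ≤ j → j ≤ e → ((s : ℕ) : ℕ∞) ≤ (γ j).order)
    (hγi : (γ i).order = (s : ℕ∞))
    (hEi : ((m + 1 : ℕ) : ℕ∞) ≤ (MvPolynomial.aeval γ (E K c (i - 1) (i + 1))).order)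
    (hElow : ∀ j : ℕ, 1 ≤ j → j + 2 ≤ i →
      ((m + 1 : ℕ) : ℕ∞) ≤ (MvPolynomial.aeval γ (E K c j i)).order)
    (hEhigh : ∀ j : ℕ, i + 2 ≤ j → j ≤ e →
      ((m + 1 : ℕ) : ℕ∞) ≤ (MvPolynomial.aeval γ (E K c i j)).order) :
    ∀ j h : ℕ, 1 ≤ j → j + 2 ≤ h → h ≤ e →
      ((m + 1 : ℕ) : ℕ∞) ≤ (MvPolynomial.aeval γ (E K c j h)).order :=
  all_equations_of_some_general K e c m s i hi2 γ hord hγi hEi hElow hEhigh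
end

section
/- For all integers i, j, h with 1 ≤ i < j < h−1 ≤ e−1, the following identity holds in K[x_1,…,x_e]: x_i·E_{jh} − x_j·E_{ih} + (∏_{n=j+1}^{h−1} x_n^{c_n−2})·x_{h−1}·E_{i,j+1} = 0. -/
open MvPolynomial

theorem syzygy_4_1_general (K : Type*) [Field K] (c : ℕ → ℕ)
    (i j h : ℕ) (hij : i < j) (hjh : j + 2 ≤ h) :
    X i * E K c j h - X j * E K c i h
      + (∏ n ∈ Finset.Ico (j + 1) h, X n ^ (c n - 2)) * X (h - 1) * E K c i (j + 1) = 0 := by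
  -- Splitting the monomial of `E_{ih}` at `j + 1` leaves a polynomial identity.
  have hsplit := Finset.prod_Ico_consecutive (fun n => (X n : MvPolynomial ℕ K) ^ (c n - 2))
    (show i + 1 ≤ j + 1 by omega) (show j + 1 ≤ h by omega)
  simp only [E, ← hsplit, Nat.add_sub_cancel]
  ring

/-- Syzygy (4.1): for `1 ≤ i < j < h-1 ≤ e-1`,
`x_i E_{jh} - x_j E_{ih} + (∏_{n=j+1}^{h-1} x_n^{c_n-2}) x_{h-1} E_{i,j+1} = 0`. -/
theorem syzygy_4_1 (K : Type*) [Field K] (e : ℕ) (he : 4 ≤ e) (c : ℕ → ℕ)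
    (hc : ∀ i, 2 ≤ i → i + 1 ≤ e → 2 ≤ c i)
    (i j h : ℕ) (hi : 1 ≤ i) (hij : i < j) (hjh : j + 2 ≤ h) (hhe : h ≤ e) :
    X i * E K c j h - X j * E K c i h
      + (∏ n ∈ Finset.Ico (j + 1) h, X n ^ (c n - 2)) * X (h - 1) * E K c i (j + 1) = 0 :=
  syzygy_4_1_general K c i j h hij hjh
end

section
/- For all integers i, j, h with 1 ≤ j < h−1 and h < i ≤ e, the following identity holds in K[x_1,…,x_e]: x_i·E_{jh} − x_h·E_{ji} + x_{j+1}·(∏_{n=j+1}^{h−1} x_n^{c_n−2})·E_{h−1,i} = 0. -/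
open MvPolynomial

theorem E_pred_left (K : Type*) [Field K] (c : ℕ → ℕ) {h : ℕ} (hh : 1 ≤ h) (i : ℕ) :
    E K c (h - 1) i =
      X (h - 1) * X i - X h * (∏ n ∈ Finset.Ico h i, X n ^ (c n - 2)) * X (i - 1) := by
  rw [E, Nat.sub_add_cancel hh]

theorem syzygy_4_2_general (K : Type*) [Field K] (c : ℕ → ℕ)
    (i j h : ℕ) (hjh : j + 2 ≤ h) (hhi : h < i) :
    X i * E K c j h - X h * E K c j i
      + X (j + 1) * (∏ n ∈ Finset.Ico (j + 1) h, X n ^ (c n - 2)) * E K c (h - 1) i = 0 := by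
  -- After splitting `∏_{j+1}^{i-1}` at `h`, the six monomials cancel in pairs.
  rw [E_pred_left K c (by omega), E, E,
    ← Finset.prod_Ico_consecutive _ (show j + 1 ≤ h by omega) hhi.le]
  ring

/-- Syzygy (4.2): for `1 ≤ j < h-1` and `h < i ≤ e`,
`x_i E_{jh} - x_h E_{ji} + x_{j+1} (∏_{n=j+1}^{h-1} x_n^{c_n-2}) E_{h-1,i} = 0`. -/
theorem syzygy_4_2 (K : Type*) [Field K] (e : ℕ) (he : 4 ≤ e) (c : ℕ → ℕ)
    (hc : ∀ i, 2 ≤ i → i + 1 ≤ e → 2 ≤ c i)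
    (i j h : ℕ) (hj : 1 ≤ j) (hjh : j + 2 ≤ h) (hhi : h < i) (hie : i ≤ e) :
    X i * E K c j h - X h * E K c j i
      + X (j + 1) * (∏ n ∈ Finset.Ico (j + 1) h, X n ^ (c n - 2)) * E K c (h - 1) i = 0 :=
  syzygy_4_2_general K c i j h hjh hhi
end

section
/- For all integers i, j with 1 ≤ j < i−1 and i+1 ≤ e, the following identity holds in K[x_1,…,x_e]: x_{i+1}·E_{j,i} − x_i·E_{j,i+1} + x_{j+1}·(∏_{n=j+1}^{i−1} x_n^{c_n−2})·E_{i−1,i+1} = 0. -/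
/-! Extending `E_{j,i}` to `E_{j,i+1}` splits off the factor `x_i^{c_i-2} x_i`; after this the
syzygy is a ring identity. -/

open MvPolynomial

theorem E_succ_right (K : Type*) [Field K] (c : ℕ → ℕ) {i j : ℕ} (hij : i + 1 ≤ j) :
    E K c i (j + 1) = X i * X (j + 1)
      - X (i + 1) * (∏ n ∈ Finset.Ico (i + 1) j, X n ^ (c n - 2)) * X j ^ (c j - 2) * X j := by
  rw [E, Finset.prod_Ico_succ_top hij, Nat.add_sub_cancel, mul_assoc _ _ (X j ^ _)]

theorem E_pred_succ (K : Type*) [Field K] (c : ℕ → ℕ) {i : ℕ} (hi : 1 ≤ i) :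
    E K c (i - 1) (i + 1) = X (i - 1) * X (i + 1) - X i * X i ^ (c i - 2) * X i := by
  rw [E_succ_right K c (by omega : i - 1 + 1 ≤ i), Nat.sub_add_cancel hi, Finset.Ico_self,
    Finset.prod_empty, mul_one]

theorem syzygy_4_3_general (K : Type*) [Field K] (c : ℕ → ℕ)
    (i j : ℕ) (hji : j + 2 ≤ i) :
    X (i + 1) * E K c j i - X i * E K c j (i + 1)
      + X (j + 1) * (∏ n ∈ Finset.Ico (j + 1) i, X n ^ (c n - 2)) * E K c (i - 1) (i + 1) = 0 := by
  rw [E_succ_right K c (by omega : j + 1 ≤ i), E_pred_succ K c (by omega : 1 ≤ i), E]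
  ring

/-- Syzygy (4.3): for `1 ≤ j < i-1` and `i+1 ≤ e`,
`x_{i+1} E_{j,i} - x_i E_{j,i+1} + x_{j+1} (∏_{n=j+1}^{i-1} x_n^{c_n-2}) E_{i-1,i+1} = 0`. -/
theorem syzygy_4_3 (K : Type*) [Field K] (e : ℕ) (he : 4 ≤ e) (c : ℕ → ℕ)
    (hc : ∀ i, 2 ≤ i → i + 1 ≤ e → 2 ≤ c i)
    (i j : ℕ) (hj : 1 ≤ j) (hji : j + 2 ≤ i) (hie : i + 1 ≤ e) :
    X (i + 1) * E K c j i - X i * E K c j (i + 1)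
      + X (j + 1) * (∏ n ∈ Finset.Ico (j + 1) i, X n ^ (c n - 2)) * E K c (i - 1) (i + 1) = 0 :=
  syzygy_4_3_general K c i j hji
end

section
/- For all integers i, h with 2 ≤ i and i+1 < h ≤ e, the following identity holds in K[x_1,…,x_e]: x_{i−1}·E_{i,h} − x_i·E_{i−1,h} + (∏_{n=i+1}^{h−1} x_n^{c_n−2})·x_{h−1}·E_{i−1,i+1} = 0. -/
open MvPolynomial

theorem E_of_lt (K : Type*) [Field K] (c : ℕ → ℕ) {i j : ℕ} (hij : i + 1 < j) :
    E K c i j = X i * X j - X (i + 1) * X (i + 1) ^ (c (i + 1) - 2)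
      * (∏ n ∈ Finset.Ico (i + 2) j, X n ^ (c n - 2)) * X (j - 1) := by
  rw [E, Finset.prod_eq_prod_Ico_succ_bot hij]
  ring

theorem E_add_two (K : Type*) [Field K] (c : ℕ → ℕ) (i : ℕ) :
    E K c i (i + 2) = X i * X (i + 2) - X (i + 1) * X (i + 1) ^ (c (i + 1) - 2) * X (i + 1) := by
  simp [E_of_lt K c (Nat.lt_succ_self (i + 1))]

theorem syzygy_4_4_general (K : Type*) [Field K] (c : ℕ → ℕ)
    (i h : ℕ) (hi : 2 ≤ i) (hih : i + 2 ≤ h) :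
    X (i - 1) * E K c i h - X i * E K c (i - 1) h
      + (∏ n ∈ Finset.Ico (i + 1) h, X n ^ (c n - 2)) * X (h - 1) * E K c (i - 1) (i + 1) = 0 := by
  obtain ⟨k, rfl⟩ : ∃ k, i = k + 1 := ⟨i - 1, by omega⟩
  rw [Nat.add_sub_cancel, E_of_lt K c (by omega : k + 1 < h), E_add_two]
  unfold E
  ring

/-- Syzygy (4.4): for `2 ≤ i` and `i+1 < h ≤ e`,
`x_{i-1} E_{i,h} - x_i E_{i-1,h} + (∏_{n=i+1}^{h-1} x_n^{c_n-2}) x_{h-1} E_{i-1,i+1} = 0`. -/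
theorem syzygy_4_4 (K : Type*) [Field K] (e : ℕ) (he : 4 ≤ e) (c : ℕ → ℕ)
    (hc : ∀ i, 2 ≤ i → i + 1 ≤ e → 2 ≤ c i)
    (i h : ℕ) (hi : 2 ≤ i) (hih : i + 2 ≤ h) (hhe : h ≤ e) :
    X (i - 1) * E K c i h - X i * E K c (i - 1) h
      + (∏ n ∈ Finset.Ico (i + 1) h, X n ^ (c n - 2)) * X (h - 1) * E K c (i - 1) (i + 1) = 0 :=
  syzygy_4_4_general K c i h hi hih
end

section
/- For all integers i, j, h with 1 ≤ j < i−1 and i+1 < h ≤ e, the following identity holds in K[x_1,…,x_e]: x_j·E_{i,h} − x_i·E_{j,h} + (∏_{n=i+1}^{h−1} x_n^{c_n−2})·x_{h−1}·E_{j,i+1} = 0. -/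
open MvPolynomial

/- After expanding, the terms `x_i x_j x_h` cancel, and the remaining terms cancel once the
product over `[j+1, h)` is split as the product over `[j+1, i+1)` times that over `[i+1, h)`. -/

theorem E_syzygy (K : Type*) [Field K] (c : ℕ → ℕ) {i j h : ℕ} (hji : j ≤ i) (hih : i < h) :
    X j * E K c i h - X i * E K c j h
      + (∏ n ∈ Finset.Ico (i + 1) h, X n ^ (c n - 2)) * X (h - 1) * E K c j (i + 1) = 0 := by
  have hsplit : (∏ n ∈ Finset.Ico (j + 1) (i + 1), X n ^ (c n - 2)) *
      (∏ n ∈ Finset.Ico (i + 1) h, X n ^ (c n - 2)) =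
      ∏ n ∈ Finset.Ico (j + 1) h, (X n : MvPolynomial ℕ K) ^ (c n - 2) :=
    Finset.prod_Ico_consecutive _ (by omega) hih
  simp only [E, Nat.add_sub_cancel, ← hsplit]
  ring

theorem syzygy_4_5_general (K : Type*) [Field K] (c : ℕ → ℕ)
    (i j h : ℕ) (hji : j + 2 ≤ i) (hih : i + 2 ≤ h) :
    X j * E K c i h - X i * E K c j h
      + (∏ n ∈ Finset.Ico (i + 1) h, X n ^ (c n - 2)) * X (h - 1) * E K c j (i + 1) = 0 :=
  E_syzygy K c (by omega) (by omega)

/-- Syzygy (4.5): for `1 ≤ j < i-1` and `i+1 < h ≤ e`,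
`x_j E_{i,h} - x_i E_{j,h} + (∏_{n=i+1}^{h-1} x_n^{c_n-2}) x_{h-1} E_{j,i+1} = 0`. -/
theorem syzygy_4_5 (K : Type*) [Field K] (e : ℕ) (he : 4 ≤ e) (c : ℕ → ℕ)
    (hc : ∀ i, 2 ≤ i → i + 1 ≤ e → 2 ≤ c i)
    (i j h : ℕ) (hj : 1 ≤ j) (hji : j + 2 ≤ i) (hih : i + 2 ≤ h) (hhe : h ≤ e) :
    X j * E K c i h - X i * E K c j h
      + (∏ n ∈ Finset.Ico (i + 1) h, X n ^ (c n - 2)) * X (h - 1) * E K c j (i + 1) = 0 :=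
  syzygy_4_5_general K c i j h hji hih
end

section
/- Let 2 ≤ i ≤ e−1 and let s, l be integers with 1 ≤ s ≤ l ≤ (c_i − 1)s. Let a_1,…,a_e be integers satisfying a_i = s, a_{i+1} = l, and the recursion a_{j−1} + a_{j+1} = c_j·a_j for all 2 ≤ j ≤ e−1. Then a_j ≥ s for every j = 1,…,e; moreover the e-tuple of power series γ = (t^{a_1},…,t^{a_e}) in K⟦t⟧ satisfies E_{jh}(γ) = 0 for all pairs 1 ≤ j < h−1 ≤ e−1, ord(γ_i) = s, and ord(γ_{i+1}) = l. -/
open MvPolynomial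

/-!
The recursion says that the second difference `a_{n+1} - 2 a_n + a_{n-1}` equals `(c_n - 2) a_n`,
so `a` is convex wherever it is nonnegative. Since `a_{i+1} = l ≥ s` and `a_{i-1} = c_i s - l ≥ s`,
convexity propagates `a_j ≥ s = a_i` in both directions from `i`. Summing the recursion over
`j < n < h` gives `a_j + a_h = a_{j+1} + a_{h-1} + ∑ (c_n - 2) a_n`, which is the equality of the
`t`-exponents of the two monomials of `E_{jh}` at `t^a`.
-/

def IsToricRecursion {R : Type*} [Add R] [Mul R] (c a : ℕ → R) (lo hi : ℕ) : Prop :=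
  ∀ n, lo < n → n < hi → a (n - 1) + a (n + 1) = c n * a n

namespace IsToricRecursion

variable {R : Type*} {c a : ℕ → R} {lo hi : ℕ}

theorem mono [Add R] [Mul R] {lo' hi' : ℕ} (h : IsToricRecursion c a lo hi) (hlo : lo ≤ lo')
    (hhi : hi' ≤ hi) :
    IsToricRecursion c a lo' hi' :=
  fun n h₁ h₂ => h n (by omega) (by omega)

theorem congr [Add R] [Mul R] {a' : ℕ → R} (h : IsToricRecursion c a lo hi)
    (ha : Set.EqOn a a' (Set.Icc lo hi)) :
    IsToricRecursion c a' lo hi := by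
  intro n h₁ h₂
  rw [← ha ⟨by omega, by omega⟩, ← ha ⟨by omega, by omega⟩, ← ha ⟨by omega, by omega⟩]
  exact h n h₁ h₂

theorem comp_add [Add R] [Mul R] (h : IsToricRecursion c a lo hi) {i : ℕ} (hlo : lo ≤ i) :
    IsToricRecursion (fun k => c (i + k)) (fun k => a (i + k)) 0 (hi - i) := by
  intro k h₁ h₂
  have := h (i + k) (by omega) (by omega)
  rw [show i + k - 1 = i + (k - 1) by omega] at this
  exact this

theorem comp_sub [AddCommMagma R] [Mul R] (h : IsToricRecursion c a lo hi) {i : ℕ}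
    (hhi : i ≤ hi) :
    IsToricRecursion (fun k => c (i - k)) (fun k => a (i - k)) 0 (i - lo) := by
  intro k h₁ h₂
  have := h (i - k) (by omega) (by omega)
  rw [show i - k - 1 = i - (k + 1) by omega, show i - k + 1 = i - (k - 1) by omega] at this
  exact (add_comm _ _).trans this

section Ordered

variable [CommRing R] [LinearOrder R] [IsStrictOrderedRing R]

theorem apply_zero_le {n : ℕ} (h : IsToricRecursion c a 0 n) (hc : ∀ k, 0 < k → k < n → 2 ≤ c k)
    (h₀ : 0 ≤ a 0) (h₀₁ : a 0 ≤ a 1) : ∀ k ≤ n, a 0 ≤ a k := by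
  have step : ∀ k < n, a 0 ≤ a k ∧ a k ≤ a (k + 1) := by
    intro k
    induction k with
    | zero => exact fun _ => ⟨le_rfl, h₀₁⟩
    | succ k ih =>
      intro hk
      obtain ⟨h0k, hk1⟩ := ih (by omega)
      have hrec := h (k + 1) (by omega) hk
      have hck := hc (k + 1) (by omega) hk
      rw [Nat.add_sub_cancel] at hrec
      have hk1_nonneg : 0 ≤ a (k + 1) := h₀.trans (h0k.trans hk1)
      exact ⟨h0k.trans hk1, by nlinarith [mul_nonneg (sub_nonneg.2 hck) hk1_nonneg]⟩
  intro k hk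
  rcases k with _ | k
  · exact le_rfl
  · obtain ⟨h0k, hk1⟩ := step k (by omega)
    exact h0k.trans hk1

theorem apply_le_of_mem_Icc {lo hi i : ℕ} (h : IsToricRecursion c a lo hi)
    (hc : ∀ n, lo < n → n < hi → 2 ≤ c n) (hlo : lo ≤ i) (hhi : i ≤ hi) (hi₀ : 0 ≤ a i)
    (hnext : a i ≤ a (i + 1)) (hprev : a i ≤ a (i - 1)) {j : ℕ} (hj : j ∈ Set.Icc lo hi) :
    a i ≤ a j := by
  obtain ⟨hj₁, hj₂⟩ := hj
  rcases le_total i j with hij | hji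
  · have := (h.comp_add hlo).apply_zero_le (fun k h₁ h₂ => hc (i + k) (by omega) (by omega))
      (by simpa using hi₀) (by simpa using hnext) (j - i) (by omega)
    simpa [Nat.add_sub_cancel' hij] using this
  · have := (h.comp_sub hhi).apply_zero_le (fun k h₁ h₂ => hc (i - k) (by omega) (by omega))
      (by simpa using hi₀) (by simpa using hprev) (i - j) (by omega)
    simpa [Nat.sub_sub_self hji] using this

end Ordered

theorem add_eq_add_add_sum [CommRing R] {j h : ℕ}
    (hrec : IsToricRecursion c a j h) (hjh : j + 2 ≤ h) :
    a j + a h = a (j + 1) + a (h - 1) + ∑ n ∈ Finset.Ico (j + 1) h, (c n - 2) * a n := by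
  induction h, hjh using Nat.le_induction with
  | base =>
    have := hrec (j + 1) (by omega) (by omega)
    rw [Nat.add_sub_cancel] at this
    rw [show j + 2 - 1 = j + 1 by omega, Nat.Ico_succ_singleton, Finset.sum_singleton]
    linear_combination this
  | succ h hjh ih =>
    have := hrec h (by omega) (by omega)
    rw [Finset.sum_Ico_succ_top (by omega), Nat.add_sub_cancel]
    linear_combination ih (hrec.mono le_rfl (by omega)) + this

end IsToricRecursion

theorem aeval_pow_E {K A : Type*} [Field K] [CommRing A] [Algebra K A] (x : A) (b c : ℕ → ℕ)
    (j h : ℕ) :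
    aeval (fun k => x ^ b k) (E K c j h) =
      x ^ (b j + b h) -
        x ^ (b (j + 1) + ∑ n ∈ Finset.Ico (j + 1) h, b n * (c n - 2) + b (h - 1)) := by
  simp only [E, map_sub, map_mul, map_prod, map_pow, aeval_X, ← pow_mul,
    Finset.prod_pow_eq_pow_sum, ← pow_add]

theorem aeval_pow_E_eq_zero {K A : Type*} [Field K] [CommRing A] [Algebra K A] (x : A)
    {b c : ℕ → ℕ} {j h : ℕ}
    (hrec : IsToricRecursion (fun n => (c n : ℤ)) (fun n => (b n : ℤ)) j h)
    (hc : ∀ n, j < n → n < h → 2 ≤ c n) (hjh : j + 2 ≤ h) :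
    aeval (fun k => x ^ b k) (E K c j h) = 0 := by
  have hsum : ∑ n ∈ Finset.Ico (j + 1) h, (b n : ℤ) * ((c n - 2 : ℕ) : ℤ) =
      ∑ n ∈ Finset.Ico (j + 1) h, ((c n : ℤ) - 2) * b n := by
    refine Finset.sum_congr rfl fun n hn => ?_
    rw [Finset.mem_Ico] at hn
    rw [Nat.cast_sub (hc n (by omega) hn.2), mul_comm]
    norm_num
  have hexp :
      b j + b h = b (j + 1) + ∑ n ∈ Finset.Ico (j + 1) h, b n * (c n - 2) + b (h - 1) := by
    have := hrec.add_eq_add_add_sum hjh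
    zify
    rw [hsum]
    linear_combination this
  rw [aeval_pow_E, hexp, sub_self]

theorem monomial_arc_on_toric_surface_general (K : Type*) [Field K] (e : ℕ)
    (c : ℕ → ℕ) (hc : ∀ i, 2 ≤ i → i + 1 ≤ e → 2 ≤ c i)
    (i : ℕ) (hi2 : 2 ≤ i) (hie : i + 1 ≤ e)
    (s l : ℕ) (hsl : s ≤ l) (hl : l ≤ (c i - 1) * s)
    (a : ℕ → ℤ) (hai : a i = (s : ℤ)) (hai1 : a (i + 1) = (l : ℤ))
    (hrec : ∀ j : ℕ, 2 ≤ j → j + 1 ≤ e → a (j - 1) + a (j + 1) = (c j : ℤ) * a j) :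
    (∀ j : ℕ, 1 ≤ j → j ≤ e → (s : ℤ) ≤ a j) ∧
    (∀ j h : ℕ, 1 ≤ j → j + 2 ≤ h → h ≤ e →
      MvPolynomial.aeval (fun k : ℕ => (PowerSeries.X : PowerSeries K) ^ (a k).toNat)
        (E K c j h) = 0) ∧
    ((PowerSeries.X : PowerSeries K) ^ (a i).toNat).order = (s : ℕ∞) ∧
    ((PowerSeries.X : PowerSeries K) ^ (a (i + 1)).toNat).order = (l : ℕ∞) := by
  have hrec' : IsToricRecursion (fun n => (c n : ℤ)) a 1 e := hrec
  have hprev : (s : ℤ) ≤ a (i - 1) := by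
    have hci := hc i hi2 hie
    have := hrec i hi2 hie
    rw [hai, hai1] at this
    zify [show 1 ≤ c i by omega] at hl
    linarith
  have hlow : ∀ j, 1 ≤ j → j ≤ e → (s : ℤ) ≤ a j := fun j hj₁ hj₂ =>
    hai ▸ hrec'.apply_le_of_mem_Icc (i := i) (fun n h₁ h₂ => by exact_mod_cast hc n h₁ h₂)
      (by omega) (by omega) (by simp [hai]) (by simp [hai, hai1, hsl]) (hai ▸ hprev) ⟨hj₁, hj₂⟩
  have htoNat : Set.EqOn a (fun k => ((a k).toNat : ℤ)) (Set.Icc 1 e) := fun k hk =>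
    (Int.toNat_of_nonneg ((Nat.cast_nonneg s).trans (hlow k hk.1 hk.2))).symm
  refine ⟨hlow, fun j h hj hjh hhe => ?_, by simp [hai], by simp [hai1]⟩
  exact aeval_pow_E_eq_zero _ ((hrec'.congr htoNat).mono hj hhe)
    (fun n h₁ h₂ => hc n (by omega) (by omega)) hjh

/-- Proposition 4.5: an integer vector `a` with `a_i = s`, `a_{i+1} = l` satisfying the
toric recursion `a_{j-1} + a_{j+1} = c_j a_j` has all entries `≥ s`, and the monomial arc
`γ = (t^{a_1}, …, t^{a_e})` satisfies all the equations `E_{jh}` exactly, with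
`ord(γ_i) = s` and `ord(γ_{i+1}) = l`. -/
theorem monomial_arc_on_toric_surface (K : Type*) [Field K] (e : ℕ) (he : 4 ≤ e)
    (c : ℕ → ℕ) (hc : ∀ i, 2 ≤ i → i + 1 ≤ e → 2 ≤ c i)
    (i : ℕ) (hi2 : 2 ≤ i) (hie : i + 1 ≤ e)
    (s l : ℕ) (hs : 1 ≤ s) (hsl : s ≤ l) (hl : l ≤ (c i - 1) * s)
    (a : ℕ → ℤ) (hai : a i = (s : ℤ)) (hai1 : a (i + 1) = (l : ℤ))
    (hrec : ∀ j : ℕ, 2 ≤ j → j + 1 ≤ e → a (j - 1) + a (j + 1) = (c j : ℤ) * a j) :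
    (∀ j : ℕ, 1 ≤ j → j ≤ e → (s : ℤ) ≤ a j) ∧
    (∀ j h : ℕ, 1 ≤ j → j + 2 ≤ h → h ≤ e →
      MvPolynomial.aeval (fun k : ℕ => (PowerSeries.X : PowerSeries K) ^ (a k).toNat)
        (E K c j h) = 0) ∧
    ((PowerSeries.X : PowerSeries K) ^ (a i).toNat).order = (s : ℕ∞) ∧
    ((PowerSeries.X : PowerSeries K) ^ (a (i + 1)).toNat).order = (l : ℕ∞) :=
  monomial_arc_on_toric_surface_general K e c hc i hi2 hie s l hsl hl a hai hai1 hrec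
end

section
/- Suppose c_i = 2 for all i = 2,…,e−1. Then for every m ≥ 1, the number N(m) of equivalence classes of T(m) under ~ equals ⌈m/2⌉ (the least integer ≥ m/2). -/
/-!
When every `c_i = 2` we have `m_i^s = min(s, m + 1 - s) = s` as soon as `2s - 1 ≤ m`, so `T(m)`
consists of the diagonal points `(i, s, s)` and the generators identify `(i, s, s)` with
`(i + 1, s, s)`. Hence the classes are the rows `s = 1, …, ⌊(m + 1)/2⌋ = ⌈m/2⌉`, each of them
nonempty because `e ≥ 3`.
-/

/-- `m_i^s := min((c_i - 1)s, (m+1) - s)`. -/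
def mIS (c : ℤ → ℤ) (m s i : ℤ) : ℤ := min ((c i - 1) * s) ((m + 1) - s)

/-- The index set `T(m) = {(i,s,l) : 2 ≤ i ≤ e-1, 1 ≤ s, 2s-1 ≤ m, s ≤ l ≤ m_i^s}` of the
irreducible components of the fiber over the singular point of the `m`-th jet scheme
(Theorem 4.11). -/
def Tset (c : ℤ → ℤ) (e m : ℤ) : Set (ℤ × ℤ × ℤ) :=
  {x | 2 ≤ x.1 ∧ x.1 ≤ e - 1 ∧ 1 ≤ x.2.1 ∧ 2 * x.2.1 - 1 ≤ m ∧
    x.2.1 ≤ x.2.2 ∧ x.2.2 ≤ mIS c m x.2.1 x.1}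

/-- The generating relation of the identifications `(i,s,s) ~ (i+1, s, m_{i+1}^s)`
for `2 ≤ i ≤ e-2`. -/
def genRel (c : ℤ → ℤ) (e m : ℤ) (a b : Tset c e m) : Prop :=
  ∃ i s : ℤ, 2 ≤ i ∧ i ≤ e - 2 ∧ (a : ℤ × ℤ × ℤ) = (i, s, s) ∧
    (b : ℤ × ℤ × ℤ) = (i + 1, s, mIS c m s (i + 1))

/-- `N(m)`: the number of equivalence classes of `T(m)` under the equivalence relation
generated by `genRel`, i.e. the number of irreducible components of the fiber over the
singular point of the `m`-th jet scheme. -/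
noncomputable def Ncount (c : ℤ → ℤ) (e m : ℤ) : ℕ := Nat.card (Quot (genRel c e m))

section

variable {c : ℤ → ℤ} {e m : ℤ}

theorem mIS_eq_self_of_eq_two {s i : ℤ} (hci : c i = 2) (hs : 2 * s - 1 ≤ m) :
    mIS c m s i = s := by
  simp only [mIS, hci]
  omega

theorem mem_Tset_iff_of_all_two (hc : ∀ i, 2 ≤ i → i ≤ e - 1 → c i = 2) {x : ℤ × ℤ × ℤ} :
    x ∈ Tset c e m ↔
      2 ≤ x.1 ∧ x.1 ≤ e - 1 ∧ 1 ≤ x.2.1 ∧ 2 * x.2.1 - 1 ≤ m ∧ x.2.2 = x.2.1 := by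
  simp only [Tset, Set.mem_ofPred_eq]
  constructor
  · rintro ⟨h₁, h₂, h₃, h₄, h₅, h₆⟩
    rw [mIS_eq_self_of_eq_two (hc _ h₁ h₂) h₄] at h₆
    exact ⟨h₁, h₂, h₃, h₄, le_antisymm h₆ h₅⟩
  · rintro ⟨h₁, h₂, h₃, h₄, h₅⟩
    rw [mIS_eq_self_of_eq_two (hc _ h₁ h₂) h₄]
    exact ⟨h₁, h₂, h₃, h₄, h₅.ge, h₅.le⟩

theorem genRel.snd_fst_eq {a b : Tset c e m} (h : genRel c e m a b) :
    (a : ℤ × ℤ × ℤ).2.1 = (b : ℤ × ℤ × ℤ).2.1 := by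
  obtain ⟨i, s, -, -, ha, hb⟩ := h
  rw [ha, hb]

def classLevel : Quot (genRel c e m) → ℤ :=
  Quot.lift (fun x => (x : ℤ × ℤ × ℤ).2.1) fun _ _ => genRel.snd_fst_eq

theorem classLevel_mem_Icc (q : Quot (genRel c e m)) :
    classLevel q ∈ Set.Icc 1 ((m + 1) / 2) := by
  induction q using Quot.ind with
  | mk x =>
    obtain ⟨-, -, h₁, h₂, -, -⟩ := x.2
    simp only [classLevel, Set.mem_Icc]
    omega

theorem quot_mk_diag_eq_of_all_two (hc : ∀ i, 2 ≤ i → i ≤ e - 1 → c i = 2) {s : ℤ}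
    (h₂ : ((2, s, s) : ℤ × ℤ × ℤ) ∈ Tset c e m) (i : ℤ) (hi : 2 ≤ i)
    (hx : ((i, s, s) : ℤ × ℤ × ℤ) ∈ Tset c e m) :
    Quot.mk (genRel c e m) ⟨(i, s, s), hx⟩ = Quot.mk _ ⟨(2, s, s), h₂⟩ := by
  induction i, hi using Int.leInduction with
  | base => rfl
  | succ i hi ih =>
    obtain ⟨-, hie, hs, hsm, -⟩ := (mem_Tset_iff_of_all_two hc).1 hx
    have hx' : ((i, s, s) : ℤ × ℤ × ℤ) ∈ Tset c e m :=
      (mem_Tset_iff_of_all_two hc).2 ⟨hi, by omega, hs, hsm, rfl⟩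
    have hstep : genRel c e m ⟨(i, s, s), hx'⟩ ⟨(i + 1, s, s), hx⟩ :=
      ⟨i, s, hi, by omega, rfl, by rw [mIS_eq_self_of_eq_two (hc _ (by omega) hie) hsm]⟩
    rw [← Quot.sound hstep, ih hx']

theorem exists_quot_mk_eq_mk_two_of_all_two (hc : ∀ i, 2 ≤ i → i ≤ e - 1 → c i = 2)
    (x : Tset c e m) :
    ∃ h₂ : ((2, (x : ℤ × ℤ × ℤ).2.1, (x : ℤ × ℤ × ℤ).2.1) : ℤ × ℤ × ℤ) ∈ Tset c e m,
      Quot.mk (genRel c e m) x = Quot.mk _ ⟨_, h₂⟩ := by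
  obtain ⟨⟨i, s, l⟩, hx⟩ := x
  obtain ⟨hi, hie, hs, hsm, hl⟩ := (mem_Tset_iff_of_all_two hc).1 hx
  dsimp only at hi hie hs hsm hl
  subst hl
  have h₂ : ((2, l, l) : ℤ × ℤ × ℤ) ∈ Tset c e m :=
    (mem_Tset_iff_of_all_two hc).2 ⟨le_rfl, by omega, hs, hsm, rfl⟩
  exact ⟨h₂, quot_mk_diag_eq_of_all_two hc h₂ i hi hx⟩

theorem classLevel_injective_of_all_two (hc : ∀ i, 2 ≤ i → i ≤ e - 1 → c i = 2) :
    Function.Injective (classLevel (c := c) (e := e) (m := m)) := by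
  rintro ⟨x⟩ ⟨y⟩ (hxy : (x : ℤ × ℤ × ℤ).2.1 = (y : ℤ × ℤ × ℤ).2.1)
  obtain ⟨_, hx⟩ := exists_quot_mk_eq_mk_two_of_all_two hc x
  obtain ⟨_, hy⟩ := exists_quot_mk_eq_mk_two_of_all_two hc y
  rw [hx, hy]
  simp_rw [hxy]

theorem exists_classLevel_eq_of_all_two (hc : ∀ i, 2 ≤ i → i ≤ e - 1 → c i = 2) (he : 3 ≤ e)
    {s : ℤ} (hs : s ∈ Set.Icc 1 ((m + 1) / 2)) :
    ∃ q : Quot (genRel c e m), classLevel q = s := by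
  have h₂ : ((2, s, s) : ℤ × ℤ × ℤ) ∈ Tset c e m :=
    (mem_Tset_iff_of_all_two hc).2
      ⟨le_rfl, by omega, hs.1, show 2 * s - 1 ≤ m by have := hs.2; omega, rfl⟩
  exact ⟨Quot.mk _ ⟨_, h₂⟩, rfl⟩

end

theorem Rat.ceil_intCast_div_two (m : ℤ) : ⌈(m : ℚ) / 2⌉ = (m + 1) / 2 := by
  have h := Rat.ceil_intCast_div_natCast m 2
  push_cast at h
  omega

/-- Corollary 4.14, first case: if all `c_i = 2` then `N(m) = ⌈m/2⌉`. -/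
theorem Ncount_of_all_two (e : ℤ) (he : 4 ≤ e) (c : ℤ → ℤ)
    (hc : ∀ i, 2 ≤ i → i ≤ e - 1 → c i = 2) :
    ∀ m : ℤ, 1 ≤ m → (Ncount c e m : ℤ) = ⌈(m : ℚ) / 2⌉ := by
  intro m hm
  have hbij : Function.Bijective
      (Set.codRestrict (classLevel (c := c) (e := e) (m := m)) _ classLevel_mem_Icc) :=
    ⟨(Set.injective_codRestrict _).2 (classLevel_injective_of_all_two hc), fun ⟨s, hs⟩ =>
      (exists_classLevel_eq_of_all_two hc (by omega) hs).imp fun _ h => Subtype.ext h⟩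
  rw [Ncount, Nat.card_eq_of_bijective _ hbij, ← Finset.coe_Icc, Nat.card_coe_set_eq,
    Set.ncard_coe_finset, Int.card_Icc, Rat.ceil_intCast_div_two]
  omega
end

section
/- Suppose not all of c_2,…,c_{e−1} are equal to 2, and let c_{i_1},…,c_{i_h} (h ≥ 1) be the list of those c_i that are different from 2. For an integer c ≥ 2 and integers m, s ≥ 1, define N_c^s(m) := sc − (2s−1) if cs ≤ m, and N_c^s(m) := m − (2s−2) if cs > m. Then for every m ≥ 1, the number N(m) of equivalence classes of T(m) under ~ equals Σ_{s=1}^{⌊(m+1)/2⌋} ( N_{c_{i_1}}^s(m) + Σ_{k=2}^{h} (N_{c_{i_k}}^s(m) − 1) ). -/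
/-- `N_c^s(m) := sc - (2s-1)` if `cs ≤ m`, and `m - (2s-2)` if `cs > m`. -/
def Nval (cc s m : ℤ) : ℤ := if cc * s ≤ m then s * cc - (2 * s - 1) else m - (2 * s - 2)

theorem Nat.card_quot_eq_card_range {α β : Type*} {r : α → α → Prop} (f : α → β)
    (hr : ∀ a b, r a b → f a = f b) (hf : ∀ a b, f a = f b → Quot.mk r a = Quot.mk r b) :
    Nat.card (Quot r) = Nat.card (Set.range f) := by
  refine Nat.card_congr (Equiv.ofBijective
    (Quot.lift (Set.rangeFactorization f) fun a b h => Subtype.ext (hr a b h)) ⟨?_, ?_⟩)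
  · rintro ⟨a⟩ ⟨b⟩ h
    exact hf a b (congrArg Subtype.val h)
  · rintro ⟨_, a, rfl⟩
    exact ⟨Quot.mk r a, rfl⟩

section JetComponents

variable {c : ℤ → ℤ} {e m s : ℤ}

theorem le_mIS {i : ℤ} (hci : 2 ≤ c i) (hs : 1 ≤ s) (hsm : 2 * s - 1 ≤ m) : s ≤ mIS c m s i := by
  have : s ≤ (c i - 1) * s := le_mul_of_one_le_left (by omega) (by omega)
  exact le_min this (by omega)

theorem mIS_add_one_sub (i : ℤ) : mIS c m s i + 1 - s = Nval (c i) s m := by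
  rw [mIS, Nval, sub_one_mul, mul_comm s]
  split_ifs <;> omega

theorem Nval_two (hsm : 2 * s - 1 ≤ m) : Nval 2 s m = 1 := by
  rw [Nval]
  split_ifs <;> omega

def genStep (c : ℤ → ℤ) (m : ℤ) (x : ℤ × ℤ × ℤ) : ℤ × ℤ × ℤ :=
  (x.1 + 1, x.2.1, mIS c m x.2.1 (x.1 + 1))

def IsGenSource (e : ℤ) (x : ℤ × ℤ × ℤ) : Prop := x.2.2 = x.2.1 ∧ x.1 ≤ e - 2

instance (e : ℤ) : DecidablePred (IsGenSource e) := fun _ => instDecidableAnd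

def genNormalForm (c : ℤ → ℤ) (e m : ℤ) (x : ℤ × ℤ × ℤ) : ℤ × ℤ × ℤ :=
  if IsGenSource e x then genNormalForm c e m (genStep c m x) else x
termination_by (e - 1 - x.1).toNat
decreasing_by have := ‹IsGenSource e x›.2; simp only [genStep]; omega

def canonicalSet (c : ℤ → ℤ) (e m : ℤ) : Set (ℤ × ℤ × ℤ) :=
  {x | x ∈ Tset c e m ∧ ¬ IsGenSource e x}

theorem genRel_iff {a b : Tset c e m} :
    genRel c e m a b ↔ IsGenSource e a ∧ (b : ℤ × ℤ × ℤ) = genStep c m a := by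
  constructor
  · rintro ⟨i, s, -, hi, ha, hb⟩
    rw [ha, hb]
    exact ⟨⟨rfl, hi⟩, rfl⟩
  · rintro ⟨⟨hl, hi⟩, hb⟩
    exact ⟨_, _, a.2.1, hi, Prod.ext rfl (Prod.ext rfl hl), hb⟩

theorem genStep_mem_Tset (hc : ∀ i, 2 ≤ i → i ≤ e - 1 → 2 ≤ c i) {x : ℤ × ℤ × ℤ}
    (hx : x ∈ Tset c e m) (hxe : x.1 ≤ e - 2) : genStep c m x ∈ Tset c e m := by
  obtain ⟨h2i, -, hs, hsm, -, -⟩ := hx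
  exact ⟨show 2 ≤ x.1 + 1 by omega, show x.1 + 1 ≤ e - 1 by omega, hs, hsm,
    le_mIS (hc _ (by omega) (by omega)) hs hsm, le_rfl⟩

theorem genNormalForm_of_isGenSource {x : ℤ × ℤ × ℤ} (h : IsGenSource e x) :
    genNormalForm c e m x = genNormalForm c e m (genStep c m x) := by
  rw [genNormalForm, if_pos h]

theorem genNormalForm_of_not_isGenSource {x : ℤ × ℤ × ℤ} (h : ¬ IsGenSource e x) :
    genNormalForm c e m x = x := by
  rw [genNormalForm, if_neg h]

theorem genNormalForm_mem_canonicalSet (hc : ∀ i, 2 ≤ i → i ≤ e - 1 → 2 ≤ c i)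
    (x : ℤ × ℤ × ℤ) (hx : x ∈ Tset c e m) : genNormalForm c e m x ∈ canonicalSet c e m := by
  induction x using genNormalForm.induct c e m with
  | case1 x h ih =>
    rw [genNormalForm_of_isGenSource h]
    exact ih (genStep_mem_Tset hc hx h.2)
  | case2 x h =>
    rw [genNormalForm_of_not_isGenSource h]
    exact ⟨hx, h⟩

theorem quot_mk_genNormalForm (hc : ∀ i, 2 ≤ i → i ≤ e - 1 → 2 ≤ c i)
    (x : ℤ × ℤ × ℤ) (hx : x ∈ Tset c e m) :
    Quot.mk (genRel c e m) ⟨genNormalForm c e m x, (genNormalForm_mem_canonicalSet hc x hx).1⟩ =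
      Quot.mk (genRel c e m) ⟨x, hx⟩ := by
  induction x using genNormalForm.induct c e m with
  | case1 x h ih =>
    have hstep := genStep_mem_Tset hc hx h.2
    simp_rw [genNormalForm_of_isGenSource h]
    rw [ih hstep]
    exact (Quot.sound (genRel_iff.2 ⟨h, rfl⟩)).symm
  | case2 x h =>
    simp_rw [genNormalForm_of_not_isGenSource h]


noncomputable def canonicalFiber (c : ℤ → ℤ) (e m i s : ℤ) : Finset ℤ :=
  Finset.Icc (if i ≤ e - 2 then s + 1 else s) (mIS c m s i)

theorem canonicalSet_eq_image : canonicalSet c e m =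
    (fun p : (_ : ℤ × ℤ) × ℤ => (p.1.2, p.1.1, p.2)) ''
      ↑((Finset.Icc 1 ((m + 1) / 2) ×ˢ Finset.Icc 2 (e - 1)).sigma
        fun p => canonicalFiber c e m p.2 p.1) := by
  ext ⟨i, s, l⟩
  simp only [canonicalSet, Tset, IsGenSource, canonicalFiber, Set.mem_ofPred_eq, Set.mem_image,
    Finset.coe_sigma, Set.mem_sigma_iff, Finset.coe_product, Set.mem_prod, Finset.coe_Icc,
    Set.mem_Icc, Sigma.exists, Prod.exists, Prod.mk.injEq]
  constructor
  · rintro ⟨⟨h1, h2, h3, h4, h5, h6⟩, h7⟩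
    refine ⟨s, i, l, ⟨⟨⟨h3, by omega⟩, h1, h2⟩, ?_, h6⟩, rfl, rfl, rfl⟩
    split_ifs <;> omega
  · rintro ⟨s, i, l, ⟨⟨⟨h3, h4⟩, h1, h2⟩, h5, h6⟩, rfl, rfl, rfl⟩
    refine ⟨⟨h1, h2, h3, by omega, by split_ifs at h5 <;> omega, h6⟩, ?_⟩
    split_ifs at h5 <;> omega

theorem card_canonicalFiber (hc : ∀ i, 2 ≤ i → i ≤ e - 1 → 2 ≤ c i) {i : ℤ}
    (hi : i ∈ Finset.Icc 2 (e - 1)) (hs : s ∈ Finset.Icc 1 ((m + 1) / 2)) :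
    ((canonicalFiber c e m i s).card : ℤ) = Nval (c i) s m - if i ≤ e - 2 then 1 else 0 := by
  rw [Finset.mem_Icc] at hi hs
  have hle := le_mIS (m := m) (hc i hi.1 hi.2) hs.1 (by omega)
  rw [canonicalFiber, Int.card_Icc, ← mIS_add_one_sub i]
  split_ifs <;> omega

theorem card_canonicalSet (hc : ∀ i, 2 ≤ i → i ≤ e - 1 → 2 ≤ c i) :
    (Nat.card (canonicalSet c e m) : ℤ) = ∑ s ∈ Finset.Icc 1 ((m + 1) / 2),
      ∑ i ∈ Finset.Icc 2 (e - 1), (Nval (c i) s m - if i ≤ e - 2 then 1 else 0) := by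
  have hinj : Function.Injective fun p : (_ : ℤ × ℤ) × ℤ => (p.1.2, p.1.1, p.2) := by
    rintro ⟨⟨s, i⟩, l⟩ ⟨⟨s', i'⟩, l'⟩ h
    simp only [Prod.mk.injEq] at h
    obtain ⟨rfl, rfl, rfl⟩ := h
    rfl
  rw [canonicalSet_eq_image, Nat.card_image_of_injective hinj, Nat.card_coe_set_eq,
    Set.ncard_coe_finset, Finset.card_sigma, Nat.cast_sum, Finset.sum_product]
  exact Finset.sum_congr rfl fun s hs => Finset.sum_congr rfl fun i hi =>
    card_canonicalFiber hc hi hs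

theorem sum_Nval_sub_ite (he : 3 ≤ e) (hsm : 2 * s - 1 ≤ m) :
    ∑ i ∈ Finset.Icc 2 (e - 1), (Nval (c i) s m - if i ≤ e - 2 then 1 else 0) =
      ∑ i ∈ (Finset.Icc 2 (e - 1)).filter (fun i => c i ≠ 2), Nval (c i) s m -
        ((((Finset.Icc 2 (e - 1)).filter (fun i => c i ≠ 2)).card : ℤ) - 1) := by
  have hsplit : ∀ i ∈ Finset.Icc 2 (e - 1), (Nval (c i) s m - if i ≤ e - 2 then 1 else 0) =
      (Nval (c i) s m - 1) + if e - 1 = i then 1 else 0 := by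
    intro i hi
    rw [Finset.mem_Icc] at hi
    split_ifs <;> omega
  have htwo : ∀ i ∈ Finset.Icc 2 (e - 1), Nval (c i) s m - 1 ≠ 0 → c i ≠ 2 := by
    rintro i - hN h
    exact hN (by rw [h, Nval_two hsm, sub_self])
  rw [Finset.sum_congr rfl hsplit, Finset.sum_add_distrib, Finset.sum_ite_eq,
    if_pos (Finset.mem_Icc.2 ⟨by omega, le_rfl⟩), ← Finset.sum_filter_of_ne htwo,
    Finset.sum_sub_distrib, Finset.sum_const, nsmul_eq_mul, mul_one]
  ring

theorem Ncount_eq_card_canonicalSet (hc : ∀ i, 2 ≤ i → i ≤ e - 1 → 2 ≤ c i) :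
    Ncount c e m = Nat.card (canonicalSet c e m) := by
  have hrange : Set.range (fun a : Tset c e m => genNormalForm c e m a) = canonicalSet c e m := by
    ext x
    constructor
    · rintro ⟨a, rfl⟩
      exact genNormalForm_mem_canonicalSet hc a.1 a.2
    · intro hx
      exact ⟨⟨x, hx.1⟩, genNormalForm_of_not_isGenSource hx.2⟩
  rw [Ncount, Nat.card_quot_eq_card_range _ ?_ ?_, hrange]
  · intro a b hab
    obtain ⟨hsrc, hb⟩ := genRel_iff.1 hab
    rw [hb, genNormalForm_of_isGenSource hsrc]
  · intro a b hab
    rw [← quot_mk_genNormalForm hc a.1 a.2, ← quot_mk_genNormalForm hc b.1 b.2]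
    exact congrArg _ (Subtype.ext hab)

end JetComponents

theorem Ncount_of_not_all_two_general (e : ℤ) (he : 4 ≤ e) (c : ℤ → ℤ)
    (hc : ∀ i, 2 ≤ i → i ≤ e - 1 → 2 ≤ c i) :
    ∀ m : ℤ, 1 ≤ m →
      (Ncount c e m : ℤ) =
        ∑ s ∈ Finset.Icc (1 : ℤ) ((m + 1) / 2),
          ((∑ i ∈ (Finset.Icc (2 : ℤ) (e - 1)).filter (fun i => c i ≠ 2), Nval (c i) s m)
            - ((((Finset.Icc (2 : ℤ) (e - 1)).filter (fun i => c i ≠ 2)).card : ℤ) - 1)) := by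
  intro m _
  rw [Ncount_eq_card_canonicalSet hc, card_canonicalSet hc]
  refine Finset.sum_congr rfl fun s hs => sum_Nval_sub_ite (by omega) ?_
  rw [Finset.mem_Icc] at hs
  omega

/-- Corollary 4.14, second case: if `c_{i_1}, …, c_{i_h}` (`h ≥ 1`) are the entries among
`c_2, …, c_{e-1}` different from `2`, then
`N(m) = Σ_{s=1}^{⌊(m+1)/2⌋} (N_{c_{i_1}}^s(m) + Σ_{k=2}^h (N_{c_{i_k}}^s(m) - 1))`,
i.e. `N(m) = Σ_{s=1}^{⌊(m+1)/2⌋} ((Σ_k N_{c_{i_k}}^s(m)) - (h - 1))`. -/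
theorem Ncount_of_not_all_two (e : ℤ) (he : 4 ≤ e) (c : ℤ → ℤ)
    (hc : ∀ i, 2 ≤ i → i ≤ e - 1 → 2 ≤ c i)
    (hne : ∃ i, 2 ≤ i ∧ i ≤ e - 1 ∧ c i ≠ 2) :
    ∀ m : ℤ, 1 ≤ m →
      (Ncount c e m : ℤ) =
        ∑ s ∈ Finset.Icc (1 : ℤ) ((m + 1) / 2),
          ((∑ i ∈ (Finset.Icc (2 : ℤ) (e - 1)).filter (fun i => c i ≠ 2), Nval (c i) s m)
            - ((((Finset.Icc (2 : ℤ) (e - 1)).filter (fun i => c i ≠ 2)).card : ℤ) - 1)) :=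
  Ncount_of_not_all_two_general e he c hc
end

section
/- Let e ≥ 4 and let c = (c_2,…,c_{e−1}) and c' = (c'_2,…,c'_{e−1}) be two tuples of integers with all entries ≥ 2. If N_c(m) = N_{c'}(m) for every m ≥ 1, then the multiset {c_2,…,c_{e−1}} equals the multiset {c'_2,…,c'_{e−1}}. (In other words, the numbers of irreducible components of the jet schemes over the singular point determine the set of entries of the continued fraction expansion, though not their order.) -/
/-
Every class of `T_c(m)` is a chain `(i,s,s) ~ (i+1,s,m_{i+1}^s) ~ ⋯` with a unique last element,
so `N_c(m) = |T_c(m)| - |L(m)|`, where `L(m) = {(i,s,s) : 2 ≤ i ≤ e-2, 1 ≤ s, 2s-1 ≤ m}` does not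
depend on `c`. Slicing by `i`, `|T_c(m)| = ∑ᵢ P(cᵢ, m+1)`, where `P(a, n)` counts the lattice points
`1 ≤ s ≤ l ≤ (a-1)s`, `s + l ≤ n`; the new points of `P(a, n+1)` lie on the line `s + l = n + 1`,
and there are `⌊(n+1)/2⌋ - ⌊n/a⌋` of them. So the `N_c(m)` determine `∑ᵢ ⌊k/cᵢ⌋` for every `k`,
hence the number of `cᵢ` dividing each `n`, and Möbius inversion recovers the multiplicities.
-/

open Finset

theorem Int.add_one_ediv_of_nonneg {a k : ℤ} (ha : 0 < a) (hk : 0 ≤ k) :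
    (k + 1) / a = k / a + if a ∣ k + 1 then 1 else 0 := by
  lift k to ℕ using hk
  lift a to ℕ using ha.le
  exact_mod_cast Nat.succ_div

namespace Multiset

variable {M M' : Multiset ℤ}

theorem card_filter_dvd_add_one {k : ℤ} (hM : ∀ a ∈ M, 0 < a) (hk : 0 ≤ k) :
    ((M.filter (· ∣ k + 1)).card : ℤ) = (M.map ((k + 1) / ·)).sum - (M.map (k / ·)).sum := by
  induction M using Multiset.induction_on with
  | empty => simp
  | cons a M ih =>
    rw [filter_cons, map_cons, map_cons, sum_cons, sum_cons, card_add, Nat.cast_add,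
      Int.add_one_ediv_of_nonneg (hM a (mem_cons_self a M)) hk,
      ih fun b hb => hM b (mem_cons_of_mem hb)]
    split_ifs <;> simp only [card_singleton, card_zero, Nat.cast_one, Nat.cast_zero] <;> ring

theorem sum_divisors_count_eq_card_filter_dvd {n : ℕ} (hM : ∀ a ∈ M, 0 < a) (hn : 0 < n) :
    ∑ d ∈ n.divisors, (M.count (d : ℤ) : ℤ) = (M.filter (· ∣ (n : ℤ))).card := by
  have hsub : ∀ a ∈ M.filter (· ∣ (n : ℤ)), a ∈ n.divisors.map Nat.castEmbedding := by
    intro a ha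
    obtain ⟨haM, hdvd⟩ := mem_filter.mp ha
    lift a to ℕ using (hM a haM).le
    simpa [hn.ne'] using Int.natCast_dvd_natCast.mp hdvd
  rw [← sum_count_eq_card hsub, Finset.sum_map]
  push_cast
  refine Finset.sum_congr rfl fun d hd => ?_
  rw [Nat.castEmbedding_apply, count_filter_of_pos]
  exact Int.natCast_dvd_natCast.mpr (Nat.dvd_of_mem_divisors hd)

theorem eq_of_card_filter_dvd_eq (hM : ∀ a ∈ M, 0 < a) (hM' : ∀ a ∈ M', 0 < a)
    (h : ∀ n : ℤ, 0 < n → (M.filter (· ∣ n)).card = (M'.filter (· ∣ n)).card) : M = M' := by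
  have moebius := fun {N : Multiset ℤ} (hN : ∀ a ∈ N, 0 < a) =>
    ArithmeticFunction.sum_eq_iff_sum_smul_moebius_eq.mp fun n (hn : 0 < n) =>
      sum_divisors_count_eq_card_filter_dvd hN hn
  have hcount : ∀ d : ℕ, 0 < d → M.count (d : ℤ) = M'.count (d : ℤ) := by
    intro d hd
    refine Int.natCast_inj.mp ((moebius hM d hd).symm.trans ?_)
    rw [← moebius hM' d hd]
    refine Finset.sum_congr rfl fun x hx => ?_
    have hx₂ := Nat.pos_of_mem_divisors (Nat.snd_mem_divisors_of_mem_antidiagonal hx)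
    rw [h _ (Nat.cast_pos.mpr hx₂)]
  ext a
  rcases le_or_gt a 0 with ha | ha
  · rw [count_eq_zero.mpr fun h => (hM a h).not_ge ha,
      count_eq_zero.mpr fun h => (hM' a h).not_ge ha]
  · lift a to ℕ using ha.le
    exact hcount a (by exact_mod_cast ha)

theorem eq_of_sum_map_ediv_eq (hM : ∀ a ∈ M, 0 < a) (hM' : ∀ a ∈ M', 0 < a)
    (h : ∀ k : ℤ, 0 ≤ k → (M.map (k / ·)).sum = (M'.map (k / ·)).sum) : M = M' := by
  refine eq_of_card_filter_dvd_eq hM hM' fun n hn => ?_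
  have hcard := card_filter_dvd_add_one hM (k := n - 1) (by omega)
  have hcard' := card_filter_dvd_add_one hM' (k := n - 1) (by omega)
  rw [sub_add_cancel] at hcard hcard'
  rw [h n hn.le, h (n - 1) (by omega), ← hcard'] at hcard
  exact_mod_cast hcard

end Multiset

theorem Nat.card_quot_eq_ncard_image {α : Type*} {S : Set α} {r : S → S → Prop} (f : α → α)
    (hf : Set.MapsTo f S S) (hresp : ∀ a b, r a b → f a = f b)
    (hrel : ∀ a : S, Relation.EqvGen r ⟨f a, hf a.2⟩ a) :
    Nat.card (Quot r) = (f '' S).ncard := by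
  rw [← Nat.card_coe_set_eq]
  refine Nat.card_eq_of_bijective
    (Quot.lift (fun a => ⟨f a, Set.mem_image_of_mem f a.2⟩) fun a b h => Subtype.ext (hresp a b h))
    ⟨fun x y hxy => ?_, fun ⟨_, a, ha, rfl⟩ => ⟨Quot.mk r ⟨a, ha⟩, rfl⟩⟩
  induction x using Quot.ind with | _ a => ?_
  induction y using Quot.ind with | _ b => ?_
  have hab : f a = f b := congrArg Subtype.val hxy
  rw [← Quot.eqvGen_sound (hrel a), ← Quot.eqvGen_sound (hrel b)]
  exact congrArg _ (Subtype.ext hab)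

noncomputable def sectorPoints (a n : ℤ) : Finset (ℤ × ℤ) :=
  (Icc 1 n ×ˢ Icc 1 n).filter fun p => p.1 ≤ p.2 ∧ p.2 ≤ (a - 1) * p.1 ∧ p.1 + p.2 ≤ n

theorem mem_sectorPoints {a n : ℤ} {p : ℤ × ℤ} :
    p ∈ sectorPoints a n ↔ 1 ≤ p.1 ∧ p.1 ≤ p.2 ∧ p.2 ≤ (a - 1) * p.1 ∧ p.1 + p.2 ≤ n := by
  simp only [sectorPoints, mem_filter, mem_product, mem_Icc]
  omega

theorem sectorPoints_eq_empty {a n : ℤ} (hn : n ≤ 1) : sectorPoints a n = ∅ :=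
  eq_empty_of_forall_notMem fun p hp => by rw [mem_sectorPoints] at hp; omega

theorem card_sectorPoints_add_one {a n : ℤ} (ha : 2 ≤ a) (hn : 0 ≤ n) :
    (#(sectorPoints a (n + 1)) : ℤ) = #(sectorPoints a n) + ((n + 1) / 2 - n / a) := by
  have hlow : (sectorPoints a (n + 1)).filter (fun p => p.1 + p.2 ≤ n) = sectorPoints a n := by
    ext p
    simp only [mem_filter, mem_sectorPoints]
    omega
  have hdiag : (sectorPoints a (n + 1)).filter (fun p => ¬ p.1 + p.2 ≤ n) =
      (Icc (n / a + 1) ((n + 1) / 2)).image fun s => (s, n + 1 - s) := by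
    ext ⟨s, l⟩
    simp only [mem_filter, mem_sectorPoints, mem_image, mem_Icc, Prod.mk.injEq, not_le,
      Order.add_one_le_iff, Int.ediv_lt_iff_lt_mul (by omega : (0 : ℤ) < a),
      Int.le_ediv_iff_mul_le (by omega : (0 : ℤ) < 2)]
    constructor
    · rintro ⟨⟨h1, h2, h3, h4⟩, h5⟩
      exact ⟨s, ⟨by nlinarith, by omega⟩, rfl, by omega⟩
    · rintro ⟨t, ⟨h1, h2⟩, rfl, rfl⟩
      have : 0 < t := by nlinarith
      exact ⟨⟨by omega, by omega, by nlinarith, by omega⟩, by omega⟩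
  have hsplit :=
    card_filter_add_card_filter_not (s := sectorPoints a (n + 1)) (fun p => p.1 + p.2 ≤ n)
  rw [hlow, hdiag, card_image_of_injective _ fun s t h => (Prod.mk.inj h).1, Int.card_Icc] at hsplit
  have hle : n / a ≤ (n + 1) / 2 := (Int.le_ediv_iff_mul_le two_pos).mpr <| by
    nlinarith [Int.ediv_mul_le n (by omega : a ≠ 0), Int.ediv_nonneg hn (by omega : 0 ≤ a)]
  omega

def linkSet (e m : ℤ) : Set (ℤ × ℤ × ℤ) :=
  {x | 2 ≤ x.1 ∧ x.1 ≤ e - 2 ∧ 1 ≤ x.2.1 ∧ 2 * x.2.1 - 1 ≤ m ∧ x.2.2 = x.2.1}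

def linkSucc (c : ℤ → ℤ) (m : ℤ) (x : ℤ × ℤ × ℤ) : ℤ × ℤ × ℤ :=
  (x.1 + 1, x.2.1, mIS c m x.2.1 (x.1 + 1))

/-- The last element of the chain of identifications `(i,s,s) ~ (i+1, s, m_{i+1}^s)` starting
at `x`; it represents the class of `x`. -/
def classRep (c : ℤ → ℤ) (e m : ℤ) (x : ℤ × ℤ × ℤ) : ℤ × ℤ × ℤ :=
  if x.2.2 = x.2.1 ∧ x.1 ≤ e - 2 then classRep c e m (linkSucc c m x) else x
termination_by (e - 1 - x.1).toNat
decreasing_by simp only [linkSucc]; omega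

section classRep

variable {c : ℤ → ℤ} {e m : ℤ}

theorem linkSet_subset_Tset (hc : ∀ i, 2 ≤ i → i ≤ e - 1 → 2 ≤ c i) : linkSet e m ⊆ Tset c e m := by
  rintro ⟨i, s, l⟩ ⟨h1, h2, h3, h4, h5 : l = s⟩
  subst h5
  dsimp only at h1 h2 h3 h4
  have := hc i h1 (by omega)
  simp only [Tset, mIS, Set.mem_ofPred_eq, le_min_iff]
  exact ⟨h1, by omega, h3, h4, le_rfl, by nlinarith, by omega⟩

theorem linkSucc_mem_Tset (hc : ∀ i, 2 ≤ i → i ≤ e - 1 → 2 ≤ c i) {x : ℤ × ℤ × ℤ}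
    (hx : x ∈ Tset c e m) (hi : x.1 ≤ e - 2) : linkSucc c m x ∈ Tset c e m := by
  obtain ⟨i, s, l⟩ := x
  obtain ⟨h1, -, h3, h4, -, -⟩ := hx
  dsimp only at hi h1 h3 h4
  have := hc (i + 1) (by omega) (by omega)
  simp only [linkSucc, Tset, Set.mem_ofPred_eq]
  exact ⟨by omega, by omega, h3, h4, le_min (by nlinarith) (by omega), le_rfl⟩

theorem classRep_eq_self {x : ℤ × ℤ × ℤ} (h : ¬ (x.2.2 = x.2.1 ∧ x.1 ≤ e - 2)) :
    classRep c e m x = x := by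
  rw [classRep, if_neg h]

theorem classRep_eq_classRep_linkSucc {x : ℤ × ℤ × ℤ} (h : x.2.2 = x.2.1 ∧ x.1 ≤ e - 2) :
    classRep c e m x = classRep c e m (linkSucc c m x) := by
  rw [classRep, if_pos h]

theorem classRep_mem_Tset_diff (hc : ∀ i, 2 ≤ i → i ≤ e - 1 → 2 ≤ c i) {x : ℤ × ℤ × ℤ}
    (hx : x ∈ Tset c e m) : classRep c e m x ∈ Tset c e m \ linkSet e m := by
  induction x using classRep.induct c e m with
  | case1 x h ih => rw [classRep_eq_classRep_linkSucc h]; exact ih (linkSucc_mem_Tset hc hx h.2)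
  | case2 x h =>
    rw [classRep_eq_self h]
    exact ⟨hx, fun ⟨_, h2, _, _, h5⟩ => h ⟨h5, h2⟩⟩

theorem classRep_image (hc : ∀ i, 2 ≤ i → i ≤ e - 1 → 2 ≤ c i) :
    classRep c e m '' Tset c e m = Tset c e m \ linkSet e m := by
  refine (Set.image_subset_iff.mpr fun x hx => classRep_mem_Tset_diff hc hx).antisymm
    fun x ⟨hx, hxL⟩ => ⟨x, hx, classRep_eq_self fun ⟨h5, h2⟩ => hxL ?_⟩
  obtain ⟨h1, -, h3, h4, -, -⟩ := hx
  exact ⟨h1, h2, h3, h4, h5⟩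

theorem classRep_eq_of_genRel {a b : Tset c e m} (h : genRel c e m a b) :
    classRep c e m a = classRep c e m b := by
  obtain ⟨i, s, -, hi, ha, hb⟩ := h
  rw [ha, hb, classRep_eq_classRep_linkSucc ⟨rfl, hi⟩]
  rfl

theorem eqvGen_classRep (hc : ∀ i, 2 ≤ i → i ≤ e - 1 → 2 ≤ c i) (a : Tset c e m) :
    Relation.EqvGen (genRel c e m) ⟨classRep c e m a, (classRep_mem_Tset_diff hc a.2).1⟩ a := by
  obtain ⟨x, hx⟩ := a
  induction x using classRep.induct c e m with
  | case1 x h ih =>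
    have hy := linkSucc_mem_Tset hc hx h.2
    have hstep : genRel c e m ⟨x, hx⟩ ⟨linkSucc c m x, hy⟩ := by
      obtain ⟨i, s, l⟩ := x
      obtain ⟨hl : l = s, hi⟩ := h
      subst hl
      exact ⟨i, l, hx.1, hi, rfl, rfl⟩
    convert (ih hy).trans _ _ _ (Relation.EqvGen.rel _ _ hstep).symm using 2
    exact classRep_eq_classRep_linkSucc h
  | case2 x h => convert Relation.EqvGen.refl _ using 2; exact (classRep_eq_self h).symm

theorem Ncount_eq_ncard_Tset_diff_linkSet (hc : ∀ i, 2 ≤ i → i ≤ e - 1 → 2 ≤ c i) :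
    Ncount c e m = (Tset c e m \ linkSet e m).ncard := by
  rw [Ncount, Nat.card_quot_eq_ncard_image (classRep c e m)
    (fun x hx => (classRep_mem_Tset_diff hc hx).1) (fun a b => classRep_eq_of_genRel)
    (eqvGen_classRep hc), classRep_image hc]

end classRep

section count

variable {c c' : ℤ → ℤ} {e : ℤ}

theorem Tset_eq_biUnion (m : ℤ) : Tset c e m =
    ↑((Icc 2 (e - 1)).biUnion fun i => (sectorPoints (c i) (m + 1)).map (.sectR i _)) := by
  ext ⟨i, s, l⟩
  simp only [Tset, mIS, Set.mem_ofPred_eq, le_min_iff, coe_biUnion, coe_map, coe_Icc,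
    Set.mem_iUnion, Set.mem_image, mem_coe, mem_sectorPoints, Function.Embedding.sectR_apply,
    Prod.mk.injEq, Set.mem_Icc, exists_prop]
  constructor
  · rintro ⟨h1, h2, h3, h4, h5, h6, h7⟩
    exact ⟨i, ⟨h1, h2⟩, (s, l), ⟨h3, h5, h6, by omega⟩, rfl, rfl⟩
  · rintro ⟨i, hi, ⟨s, l⟩, ⟨h3, h5, h6, h7⟩, rfl, h⟩
    obtain ⟨rfl, rfl⟩ := Prod.mk.inj h
    exact ⟨hi.1, hi.2, h3, by omega, h5, h6, by omega⟩

theorem ncard_Tset (m : ℤ) :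
    (Tset c e m).ncard = ∑ i ∈ Icc 2 (e - 1), #(sectorPoints (c i) (m + 1)) := by
  rw [Tset_eq_biUnion, Set.ncard_coe_finset, card_biUnion]
  · simp only [card_map]
  · intro i _ j _ hij
    simp only [Function.onFun, disjoint_left, mem_map, Function.Embedding.sectR_apply]
    rintro _ ⟨p, -, rfl⟩ ⟨q, -, h⟩
    exact hij (Prod.mk.inj h).1.symm

theorem Ncount_add_ncard_linkSet (hc : ∀ i, 2 ≤ i → i ≤ e - 1 → 2 ≤ c i) (m : ℤ) :
    Ncount c e m + (linkSet e m).ncard = ∑ i ∈ Icc 2 (e - 1), #(sectorPoints (c i) (m + 1)) := by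
  rw [Ncount_eq_ncard_Tset_diff_linkSet hc,
    Set.ncard_sdiff_add_ncard_of_subset (linkSet_subset_Tset hc)
      (Tset_eq_biUnion m ▸ finite_toSet _),
    ncard_Tset]

theorem sum_card_sectorPoints_eq_of_Ncount_eq (hc : ∀ i, 2 ≤ i → i ≤ e - 1 → 2 ≤ c i)
    (hc' : ∀ i, 2 ≤ i → i ≤ e - 1 → 2 ≤ c' i)
    (hN : ∀ m : ℤ, 1 ≤ m → Ncount c e m = Ncount c' e m) (n : ℤ) :
    ∑ i ∈ Icc 2 (e - 1), #(sectorPoints (c i) n) =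
      ∑ i ∈ Icc 2 (e - 1), #(sectorPoints (c' i) n) := by
  rcases le_or_gt n 1 with hn | hn
  · simp only [sectorPoints_eq_empty hn, card_empty]
  · have h := Ncount_add_ncard_linkSet hc (n - 1)
    rw [hN _ (by omega), Ncount_add_ncard_linkSet hc', sub_add_cancel] at h
    exact h.symm

end count

theorem sum_ediv_eq_sum_card_sectorPoints {ι : Type*} (s : Finset ι) {c : ι → ℤ}
    (hc : ∀ i ∈ s, 2 ≤ c i) {k : ℤ} (hk : 0 ≤ k) :
    ∑ i ∈ s, k / c i = #s * ((k + 1) / 2) + ((∑ i ∈ s, #(sectorPoints (c i) k) : ℕ) : ℤ) -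
      ((∑ i ∈ s, #(sectorPoints (c i) (k + 1)) : ℕ) : ℤ) := by
  push_cast
  rw [sum_congr rfl fun i hi => card_sectorPoints_add_one (hc i hi) hk, sum_add_distrib,
    sum_sub_distrib, sum_const, nsmul_eq_mul]
  ring

theorem multiset_eq_of_Ncount_eq_general (e : ℤ) (c c' : ℤ → ℤ)
    (hc : ∀ i, 2 ≤ i → i ≤ e - 1 → 2 ≤ c i)
    (hc' : ∀ i, 2 ≤ i → i ≤ e - 1 → 2 ≤ c' i)
    (hN : ∀ m : ℤ, 1 ≤ m → Ncount c e m = Ncount c' e m) :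
    (Finset.Icc (2 : ℤ) (e - 1)).val.map c = (Finset.Icc (2 : ℤ) (e - 1)).val.map c' := by
  have hc₂ : ∀ i ∈ Icc 2 (e - 1), 2 ≤ c i := fun i hi => (mem_Icc.mp hi).elim (hc i)
  have hc₂' : ∀ i ∈ Icc 2 (e - 1), 2 ≤ c' i := fun i hi => (mem_Icc.mp hi).elim (hc' i)
  have hS := sum_card_sectorPoints_eq_of_Ncount_eq hc hc' hN
  refine Multiset.eq_of_sum_map_ediv_eq
    (Multiset.forall_mem_map_iff.mpr fun i hi => (hc₂ i hi).trans_lt' two_pos)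
    (Multiset.forall_mem_map_iff.mpr fun i hi => (hc₂' i hi).trans_lt' two_pos) fun k hk => ?_
  simp only [Multiset.map_map, Function.comp_def, sum_map_val]
  rw [sum_ediv_eq_sum_card_sectorPoints _ hc₂ hk, sum_ediv_eq_sum_card_sectorPoints _ hc₂' hk,
    hS, hS]

/-- Corollary 4.15: the numbers of irreducible components `N(m)` for all `m ≥ 1`
determine the multiset `{c_2, …, c_{e-1}}`. -/
theorem multiset_eq_of_Ncount_eq (e : ℤ) (he : 4 ≤ e) (c c' : ℤ → ℤ)
    (hc : ∀ i, 2 ≤ i → i ≤ e - 1 → 2 ≤ c i)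
    (hc' : ∀ i, 2 ≤ i → i ≤ e - 1 → 2 ≤ c' i)
    (hN : ∀ m : ℤ, 1 ≤ m → Ncount c e m = Ncount c' e m) :
    (Finset.Icc (2 : ℤ) (e - 1)).val.map c = (Finset.Icc (2 : ℤ) (e - 1)).val.map c' :=
  multiset_eq_of_Ncount_eq_general e c c' hc hc' hN
end
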